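/- In a skew lattice, if a ≻ b (a ∨ b ∨ a = a but not b ⪰ a), then the pair a > a ∧ b ∧ a is parallel to the pair b ∨ a ∨ b > b. -/
import Mathlib


/-- A skew lattice: two associative idempotent operations satisfying absorption. -/
structure SkewLattice (α : Type*) where
  join : α → α → α
  meet : α → α → α
  join_assoc : ∀ x y z, join (join x y) z = join x (join y z)
  meet_assoc : ∀ x y z, meet (meet x y) z = meet x (meet y z)
  join_idem : ∀ x, join x x = x
  meet_idem : ∀ x, meet x x = x
  absorb₁ : ∀ x y, meet x (join x y) = x
  absorb₂ : ∀ x y, meet (join y x) x = x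
  absorb₃ : ∀ x y, join x (meet x y) = x
  absorb₄ : ∀ x y, join (meet y x) x = x

/-- Natural partial order: x ≥ y iff x ∨ y = x = y ∨ x. -/
def SkewLattice.geq {α : Type*} (S : SkewLattice α) (x y : α) : Prop :=
  S.join x y = x ∧ S.join y x = x

/-- Strict natural partial order. -/
def SkewLattice.gt {α : Type*} (S : SkewLattice α) (x y : α) : Prop :=
  S.geq x y ∧ x ≠ y

/-- Natural preorder: x ⪰ y iff x ∨ y ∨ x = x. -/
def SkewLattice.succeq {α : Type*} (S : SkewLattice α) (x y : α) : Prop :=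
  S.join x (S.join y x) = x

/-- Green's relation D: x D y iff x ∧ y ∧ x = x and y ∧ x ∧ y = y. -/
def SkewLattice.dd {α : Type*} (S : SkewLattice α) (x y : α) : Prop :=
  S.meet x (S.meet y x) = x ∧ S.meet y (S.meet x y) = y

/-- Parallelism of strictly ordered pairs: a > b ∥ a' > b'. -/
def SkewLattice.parallel {α : Type*} (S : SkewLattice α) (a b a' b' : α) : Prop :=
  S.gt a b ∧ S.gt a' b' ∧ S.dd a a' ∧ S.dd b b' ∧
    a' = S.join b' (S.join a b') ∧ b' = S.meet a' (S.meet b a')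

/-- The dual of a skew lattice, with meet and join interchanged. -/
def SkewLattice.dual {α : Type*} (S : SkewLattice α) : SkewLattice α where
  join := S.meet
  meet := S.join
  join_assoc := S.meet_assoc
  meet_assoc := S.join_assoc
  join_idem := S.meet_idem
  meet_idem := S.join_idem
  absorb₁ := S.absorb₃
  absorb₂ := S.absorb₄
  absorb₃ := S.absorb₁
  absorb₄ := S.absorb₂

/-- Key lemma: x ∧ y ∧ x = x implies y ∨ x ∨ y = y. -/
theorem SkewLattice.preorder_meet_to_join {α : Type*} (S : SkewLattice α) (x y : α)
    (h : S.meet x (S.meet y x) = x) : S.join y (S.join x y) = y := by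
  have he : S.meet (S.meet x y) x = x := by rw [S.meet_assoc]; exact h
  have hex : S.join (S.meet x y) x = S.meet x y := by
    calc S.join (S.meet x y) x
        = S.join (S.meet x y) (S.meet (S.meet x y) x) := by rw [he]
      _ = S.meet x y := S.absorb₃ (S.meet x y) x
  calc S.join y (S.join x y)
      = S.join (S.join (S.meet x y) y) (S.join x y) := by rw [S.absorb₄ y x]
    _ = S.join (S.join (S.join (S.meet x y) x) y) (S.join x y) := by rw [hex]
    _ = S.join (S.meet x y) (S.join x (S.join y (S.join x y))) := by
        simp only [S.join_assoc]
    _ = S.join (S.meet x y) (S.join (S.join x y) (S.join x y)) := by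
        rw [S.join_assoc x y (S.join x y)]
    _ = S.join (S.meet x y) (S.join x y) := by rw [S.join_idem]
    _ = S.join (S.join (S.meet x y) x) y := by rw [S.join_assoc]
    _ = S.join (S.meet x y) y := by rw [hex]
    _ = y := S.absorb₄ y x

/-- Dual key lemma: x ∨ y ∨ x = x implies y ∧ x ∧ y = y. -/
theorem SkewLattice.preorder_join_to_meet {α : Type*} (S : SkewLattice α) (x y : α)
    (h : S.join x (S.join y x) = x) : S.meet y (S.meet x y) = y :=
  S.dual.preorder_meet_to_join x y h

theorem skew_parallel_of_strict_preorder {α : Type*} (S : SkewLattice α)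
    (a b : α) (h1 : S.succeq a b) (h2 : ¬ S.succeq b a) :
    S.parallel a (S.meet a (S.meet b a)) (S.join b (S.join a b)) b := by
  have h1' : S.join a (S.join b a) = a := h1
  -- K : b ∧ a ∧ b = b
  have K : S.meet b (S.meet a b) = b := S.preorder_join_to_meet a b h1'
  set m := S.meet a (S.meet b a) with hm
  set j := S.join b (S.join a b) with hj
  have hbj : S.meet b j = b := S.absorb₁ b (S.join a b)
  have hjb : S.meet j b = b := by
    rw [hj, ← S.join_assoc]; exact S.absorb₂ b (S.join b a)
  -- collapse lemma from h1'
  have hz : ∀ z, S.join a (S.join b (S.join a z)) = S.join a z := by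
    intro z
    calc S.join a (S.join b (S.join a z))
        = S.join (S.join a (S.join b a)) z := by simp only [S.join_assoc]
      _ = S.join a z := by rw [h1']
  have J2 : S.join a (S.join j a) = a := by
    rw [hj]; simp only [S.join_assoc]; rw [h1', h1']
  have J1 : S.join j (S.join a j) = j := by
    rw [hj]; simp only [S.join_assoc]; rw [hz, hz]
  have W1 : S.meet a (S.meet j a) = a := S.preorder_join_to_meet j a J1
  have W2 : S.meet j (S.meet a j) = j := S.preorder_join_to_meet a j J2
  have A : S.meet b (S.meet a j) = b := by
    calc S.meet b (S.meet a j)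
        = S.meet (S.meet b j) (S.meet a j) := by rw [hbj]
      _ = S.meet b (S.meet j (S.meet a j)) := by rw [S.meet_assoc]
      _ = S.meet b j := by rw [W2]
      _ = b := hbj
  have B : S.meet j (S.meet a b) = b := by
    calc S.meet j (S.meet a b)
        = S.meet j (S.meet a (S.meet j b)) := by rw [hjb]
      _ = S.meet (S.meet j (S.meet a j)) b := by simp only [S.meet_assoc]
      _ = S.meet j b := by rw [W2]
      _ = b := hjb
  refine ⟨⟨⟨?_, ?_⟩, ?_⟩, ⟨⟨?_, ?_⟩, ?_⟩, ⟨W1, W2⟩, ⟨?_, ?_⟩, ?_, ?_⟩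
  · -- a ∨ m = a
    exact S.absorb₃ a (S.meet b a)
  · -- m ∨ a = a
    rw [hm, ← S.meet_assoc]; exact S.absorb₄ a (S.meet a b)
  · -- a ≠ m
    intro h
    exact h2 (S.preorder_meet_to_join a b h.symm)
  · -- j ∨ b = j
    rw [hj]; simp only [S.join_assoc]; rw [S.join_idem]
  · -- b ∨ j = j
    rw [hj, ← S.join_assoc, S.join_idem]
  · -- j ≠ b
    intro h
    exact h2 h
  · -- m ∧ b ∧ m = m
    have hk : ∀ z, S.meet b (S.meet a (S.meet b z)) = S.meet b z := by
      intro z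
      calc S.meet b (S.meet a (S.meet b z))
          = S.meet (S.meet b (S.meet a b)) z := by simp only [S.meet_assoc]
        _ = S.meet b z := by rw [K]
    rw [hm]; simp only [S.meet_assoc]; rw [hk, hk]
  · -- b ∧ m ∧ b = b
    rw [hm]; simp only [S.meet_assoc]; rw [K, K]
  · -- j = b ∨ a ∨ b
    rw [hj]
  · -- b = j ∧ m ∧ j
    have hmj : S.meet m j = S.meet a b := by
      calc S.meet m j
          = S.meet a (S.meet b (S.meet a j)) := by rw [hm]; simp only [S.meet_assoc]
        _ = S.meet a b := by rw [A]
    rw [hmj, B]
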